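/- Fix z in a small neighborhood of 1/2 and let w₀, w₁, w₂ be the three branches of solutions to w(w−1)(w−z) = Q with w₀(0)=0, w₁(0)=1, w₂(0)=z. Then at the critical values: w₂(Q₊) = w₊ = w₁(Q₊) while w₀(Q₊) ≠ w₊, and w₂(Q₋) = w₋ = w₀(Q₋) while w₁(Q₋) ≠ w₋. -/

import Mathlib

open Complex

/-- The cubic `Q(w) = w(w−1)(w−z)`. -/
noncomputable def cubicQ (z w : ℂ) : ℂ := w * (w - 1) * (w - z)

/-- The critical point `w₊(z)` (principal branch). -/
noncomputable def wplus (z : ℂ) : ℂ :=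
  (z + 1) / 3 + (1 / 3) * (z ^ 2 - z + 1) ^ ((1 : ℂ) / 2)

/-- The critical point `w₋(z)` (principal branch). -/
noncomputable def wminus (z : ℂ) : ℂ :=
  (z + 1) / 3 - (1 / 3) * (z ^ 2 - z + 1) ^ ((1 : ℂ) / 2)

/-- The critical value `Q₊(z)`. -/
noncomputable def Qplus (z : ℂ) : ℂ := cubicQ z (wplus z)

/-- The critical value `Q₋(z)`. -/
noncomputable def Qminus (z : ℂ) : ℂ := cubicQ z (wminus z)

/- ### Algebraic lemmas -/

lemma hc_sq (z : ℂ) (hz : z^2 - z + 1 ≠ 0) :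
    ((z^2 - z + 1) ^ ((1:ℂ)/2))^2 = z^2 - z + 1 := by
  rw [sq, ← Complex.cpow_add _ _ hz]
  norm_num

lemma key_ident (z W w : ℂ) (hW : 3*W^2 - 2*(1+z)*W + z = 0) :
    cubicQ z w - cubicQ z W = (w - W)^2 * (w - ((1+z) - 2*W)) := by
  unfold cubicQ
  linear_combination (w - W) * hW

lemma deriv_plus (z : ℂ) (hz : z^2 - z + 1 ≠ 0) :
    3*(wplus z)^2 - 2*(1+z)*(wplus z) + z = 0 := by
  have hc := hc_sq z hz
  unfold wplus
  linear_combination hc / 3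

lemma deriv_minus (z : ℂ) (hz : z^2 - z + 1 ≠ 0) :
    3*(wminus z)^2 - 2*(1+z)*(wminus z) + z = 0 := by
  have hc := hc_sq z hz
  unfold wminus
  linear_combination hc / 3

lemma fiber_plus (z : ℂ) (hz : z^2 - z + 1 ≠ 0) (w : ℂ) (hw : cubicQ z w = Qplus z) :
    w = wplus z ∨ w = (1+z) - 2*wplus z := by
  have h := key_ident z (wplus z) w (deriv_plus z hz)
  rw [show cubicQ z (wplus z) = Qplus z from rfl, hw, sub_self] at h
  rcases mul_eq_zero.mp h.symm with h' | h'
  · left; exact sub_eq_zero.mp (pow_eq_zero_iff (n := 2) (by norm_num) |>.mp h')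
  · right; exact sub_eq_zero.mp h'

lemma fiber_minus (z : ℂ) (hz : z^2 - z + 1 ≠ 0) (w : ℂ) (hw : cubicQ z w = Qminus z) :
    w = wminus z ∨ w = (1+z) - 2*wminus z := by
  have h := key_ident z (wminus z) w (deriv_minus z hz)
  rw [show cubicQ z (wminus z) = Qminus z from rfl, hw, sub_self] at h
  rcases mul_eq_zero.mp h.symm with h' | h'
  · left; exact sub_eq_zero.mp (pow_eq_zero_iff (n := 2) (by norm_num) |>.mp h')
  · right; exact sub_eq_zero.mp h'

/- ### Values at z = 1/2 -/

lemma sqrt3_sq : (Real.sqrt 3)^2 = 3 := Real.sq_sqrt (by norm_num)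
lemma sqrt3_gt_one : 1 < Real.sqrt 3 := by
  nlinarith [sqrt3_sq, Real.sqrt_nonneg 3]

lemma c_half : (((1/2:ℂ))^2 - 1/2 + 1) ^ ((1:ℂ)/2) = ((Real.sqrt 3 / 2 : ℝ) : ℂ) := by
  have h1 : ((1/2:ℂ))^2 - 1/2 + 1 = ((3/4 : ℝ) : ℂ) := by norm_num
  have h2 : ((3/4 : ℝ) ^ ((1:ℝ)/2) : ℝ) = Real.sqrt 3 / 2 := by
    rw [← Real.sqrt_eq_rpow]
    rw [show (3/4:ℝ) = 3 * (1/2)^2 by norm_num, Real.sqrt_mul (by norm_num),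
      Real.sqrt_sq (by norm_num)]
    ring
  rw [h1, ← h2, Complex.ofReal_cpow (by norm_num)]
  norm_num

lemma wplus_half : wplus (1/2) = ((1/2 + Real.sqrt 3 / 6 : ℝ) : ℂ) := by
  unfold wplus
  rw [c_half]
  push_cast
  ring

lemma wminus_half : wminus (1/2) = ((1/2 - Real.sqrt 3 / 6 : ℝ) : ℂ) := by
  unfold wminus
  rw [c_half]
  push_cast
  ring

lemma cubic_real (a : ℝ) :
    cubicQ (1/2 : ℂ) ((a:ℝ):ℂ) = ((a * (a-1) * (a-1/2) : ℝ) : ℂ) := by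
  unfold cubicQ; push_cast; ring

lemma Qplus_half : Qplus (1/2) = ((-(Real.sqrt 3)/36 : ℝ) : ℂ) := by
  unfold Qplus
  rw [wplus_half, cubic_real]
  congr 1
  have hs := sqrt3_sq
  set s := Real.sqrt 3
  linear_combination (s/216) * hs

lemma Qminus_half : Qminus (1/2) = (((Real.sqrt 3)/36 : ℝ) : ℂ) := by
  unfold Qminus
  rw [wminus_half, cubic_real]
  congr 1
  have hs := sqrt3_sq
  set s := Real.sqrt 3
  linear_combination (-s/216) * hs

/- ### Separation lemmas -/

lemma sep_plus (z : ℂ) (hz : ‖z - 1/2‖ < 1/12)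
    (hQ : ‖Qplus z - Qplus (1/2)‖ < 1/32)
    (t : ℝ) (ht0 : 0 ≤ t) (ht1 : t ≤ 1)
    (w : ℂ) (hw : cubicQ z w = (t : ℂ) * Qplus z) :
    w.re ≠ 1/4 := by
  intro hre
  set y := w.im with hy
  have hs0 : (0:ℝ) ≤ Real.sqrt 3 := Real.sqrt_nonneg 3
  set A : ℂ := cubicQ (1/2) w - (t:ℂ) * Qplus (1/2) with hA
  have hAre : A.re = 3/4 * (1/16 + y^2) + t * (Real.sqrt 3 / 36) := by
    have h12 : ((1:ℂ)/2) = ((1/2 : ℝ) : ℂ) := by norm_num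
    rw [hA, Qplus_half]
    simp only [cubicQ, h12, Complex.sub_re, Complex.mul_re, Complex.mul_im, Complex.sub_im,
      Complex.one_re, Complex.one_im, Complex.ofReal_re, Complex.ofReal_im, hre, ← hy]
    ring
  have hre_le : A.re ≤ ‖A‖ := by exact Complex.re_le_norm A
  have hdecomp : A = w * (w-1) * (z - (1:ℂ)/2) + (t:ℂ) * (Qplus z - Qplus (1/2))
      + (cubicQ z w - (t:ℂ) * Qplus z) := by
    rw [hA]; unfold cubicQ; ring
  have hnA : ‖A‖ ≤ ‖w*(w-1)‖ * ‖z - (1:ℂ)/2‖ + t * ‖Qplus z - Qplus (1/2)‖ := by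
    rw [hdecomp, hw, sub_self, add_zero]
    calc ‖w * (w-1) * (z - (1:ℂ)/2) + (t:ℂ) * (Qplus z - Qplus (1/2))‖
        ≤ ‖w * (w-1) * (z - (1:ℂ)/2)‖ + ‖(t:ℂ) * (Qplus z - Qplus (1/2))‖ := norm_add_le _ _
      _ = ‖w*(w-1)‖ * ‖z - (1:ℂ)/2‖ + t * ‖Qplus z - Qplus (1/2)‖ := by
          rw [norm_mul (w*(w-1)) (z - (1:ℂ)/2), norm_mul ((t:ℂ)), Complex.norm_real,
            Real.norm_eq_abs, _root_.abs_of_nonneg ht0]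
  set n := ‖w*(w-1)‖ with hn
  have hn0 : 0 ≤ n := norm_nonneg _
  have hn2 : n^2 = (1/16 + y^2) * (9/16 + y^2) := by
    rw [hn, Complex.sq_norm, Complex.normSq_mul]
    simp only [Complex.normSq_apply, Complex.sub_re, Complex.sub_im, Complex.one_re,
      Complex.one_im, hre, ← hy]
    ring
  have hnpos : 0 < n := by
    rcases hn0.lt_or_eq with h | h
    · exact h
    · exfalso; nlinarith [sq_nonneg y]
  have hn3 : n ≤ 3 * (1/16 + y^2) := by nlinarith [sq_nonneg y]
  have h1 : n * ‖z - (1:ℂ)/2‖ < n * (1/12) := mul_lt_mul_of_pos_left hz hnpos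
  have h2 : t * ‖Qplus z - Qplus (1/2)‖ ≤ 1/32 := by
    have := norm_nonneg (Qplus z - Qplus (1/2))
    nlinarith
  nlinarith [sq_nonneg y, mul_nonneg ht0 hs0]

lemma sep_minus (z : ℂ) (hz : ‖z - 1/2‖ < 1/12)
    (hQ : ‖Qminus z - Qminus (1/2)‖ < 1/32)
    (t : ℝ) (ht0 : 0 ≤ t) (ht1 : t ≤ 1)
    (w : ℂ) (hw : cubicQ z w = (t : ℂ) * Qminus z) :
    w.re ≠ 3/4 := by
  intro hre
  set y := w.im with hy
  have hs0 : (0:ℝ) ≤ Real.sqrt 3 := Real.sqrt_nonneg 3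
  set A : ℂ := cubicQ (1/2) w - (t:ℂ) * Qminus (1/2) with hA
  have hAre : A.re = -(3/4 * (1/16 + y^2) + t * (Real.sqrt 3 / 36)) := by
    have h12 : ((1:ℂ)/2) = ((1/2 : ℝ) : ℂ) := by norm_num
    rw [hA, Qminus_half]
    simp only [cubicQ, h12, Complex.sub_re, Complex.mul_re, Complex.mul_im, Complex.sub_im,
      Complex.one_re, Complex.one_im, Complex.ofReal_re, Complex.ofReal_im, hre, ← hy]
    ring
  have hre_le : 3/4 * (1/16 + y^2) + t * (Real.sqrt 3 / 36) ≤ ‖A‖ := by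
    have h1 := Complex.abs_re_le_norm A
    rw [hAre] at h1
    rw [abs_neg] at h1
    calc 3/4 * (1/16 + y^2) + t * (Real.sqrt 3 / 36)
        ≤ |3/4 * (1/16 + y^2) + t * (Real.sqrt 3 / 36)| := le_abs_self _
      _ ≤ ‖A‖ := h1
  have hdecomp : A = w * (w-1) * (z - (1:ℂ)/2) + (t:ℂ) * (Qminus z - Qminus (1/2))
      + (cubicQ z w - (t:ℂ) * Qminus z) := by
    rw [hA]; unfold cubicQ; ring
  have hnA : ‖A‖ ≤ ‖w*(w-1)‖ * ‖z - (1:ℂ)/2‖ + t * ‖Qminus z - Qminus (1/2)‖ := by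
    rw [hdecomp, hw, sub_self, add_zero]
    calc ‖w * (w-1) * (z - (1:ℂ)/2) + (t:ℂ) * (Qminus z - Qminus (1/2))‖
        ≤ ‖w * (w-1) * (z - (1:ℂ)/2)‖ + ‖(t:ℂ) * (Qminus z - Qminus (1/2))‖ := norm_add_le _ _
      _ = ‖w*(w-1)‖ * ‖z - (1:ℂ)/2‖ + t * ‖Qminus z - Qminus (1/2)‖ := by
          rw [norm_mul (w*(w-1)) (z - (1:ℂ)/2), norm_mul ((t:ℂ)), Complex.norm_real,
            Real.norm_eq_abs, _root_.abs_of_nonneg ht0]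
  set n := ‖w*(w-1)‖ with hn
  have hn0 : 0 ≤ n := norm_nonneg _
  have hn2 : n^2 = (9/16 + y^2) * (1/16 + y^2) := by
    rw [hn, Complex.sq_norm, Complex.normSq_mul]
    simp only [Complex.normSq_apply, Complex.sub_re, Complex.sub_im, Complex.one_re,
      Complex.one_im, hre, ← hy]
    ring
  have hnpos : 0 < n := by
    rcases hn0.lt_or_eq with h | h
    · exact h
    · exfalso; nlinarith [sq_nonneg y]
  have hn3 : n ≤ 3 * (1/16 + y^2) := by nlinarith [sq_nonneg y]
  have h1 : n * ‖z - (1:ℂ)/2‖ < n * (1/12) := mul_lt_mul_of_pos_left hz hnpos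
  have h2 : t * ‖Qminus z - Qminus (1/2)‖ ≤ 1/32 := by
    have := norm_nonneg (Qminus z - Qminus (1/2))
    nlinarith
  nlinarith [sq_nonneg y, mul_nonneg ht0 hs0]

/- ### Continuity -/

lemma hc_cont : ContinuousAt (fun z : ℂ => (z ^ 2 - z + 1) ^ ((1:ℂ)/2)) (1/2) := by
  apply ContinuousAt.cpow (by fun_prop) continuousAt_const
  have hval : ((1/2:ℂ))^2 - (1/2) + 1 = ((3/4:ℝ):ℂ) := by norm_num
  rw [Complex.mem_slitPlane_iff, hval]
  left
  norm_num

lemma hwp_cont : ContinuousAt wplus (1/2 : ℂ) := by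
  unfold wplus
  exact ((continuousAt_id.add continuousAt_const).div_const 3).add
    (continuousAt_const.mul hc_cont)

lemma hwm_cont : ContinuousAt wminus (1/2 : ℂ) := by
  unfold wminus
  exact ((continuousAt_id.add continuousAt_const).div_const 3).sub
    (continuousAt_const.mul hc_cont)

lemma hQp_cont : ContinuousAt Qplus (1/2 : ℂ) := by
  unfold Qplus cubicQ
  exact (hwp_cont.mul (hwp_cont.sub continuousAt_const)).mul (hwp_cont.sub continuousAt_id)

lemma hQm_cont : ContinuousAt Qminus (1/2 : ℂ) := by
  unfold Qminus cubicQ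
  exact (hwm_cont.mul (hwm_cont.sub continuousAt_const)).mul (hwm_cont.sub continuousAt_id)

/- ### Intermediate value helpers -/

lemma stay_lt (f : ℝ → ℂ) (hf : ContinuousOn f (Set.Icc 0 1)) (c : ℝ)
    (hne : ∀ s ∈ Set.Icc (0:ℝ) 1, (f s).re ≠ c) (h0 : (f 0).re < c) : (f 1).re < c := by
  by_contra h
  have h1 : c < (f 1).re :=
    lt_of_le_of_ne (not_lt.mp h) (Ne.symm (hne 1 (by norm_num)))
  have hg : ContinuousOn (fun s => (f s).re) (Set.Icc 0 1) :=
    Complex.continuous_re.comp_continuousOn hf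
  obtain ⟨s, hs, hsc⟩ := intermediate_value_Icc (by norm_num : (0:ℝ) ≤ 1) hg
    ⟨le_of_lt h0, le_of_lt h1⟩
  exact hne s hs hsc

lemma stay_gt (f : ℝ → ℂ) (hf : ContinuousOn f (Set.Icc 0 1)) (c : ℝ)
    (hne : ∀ s ∈ Set.Icc (0:ℝ) 1, (f s).re ≠ c) (h0 : c < (f 0).re) : c < (f 1).re := by
  by_contra h
  have h1 : (f 1).re < c :=
    lt_of_le_of_ne (not_lt.mp h) (hne 1 (by norm_num))
  have hg : ContinuousOn (fun s => (f s).re) (Set.Icc 0 1) :=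
    Complex.continuous_re.comp_continuousOn hf
  obtain ⟨s, hs, hsc⟩ := intermediate_value_Icc' (by norm_num : (0:ℝ) ≤ 1) hg
    ⟨le_of_lt h1, le_of_lt h0⟩
  exact hne s hs hsc

/- ### Main theorem -/

/-- For `z` in a small neighborhood of `1/2`, let a branch of solutions of
`w(w−1)(w−z) = Q` be continued along the straight segment from `Q = 0` to a
critical value (encoded as a continuous function `f` on `[0,1]` with
`cubicQ z (f s) = s·Q_±(z)`), with initial value `0`, `1` or `z`
(the branches `w₀, w₁, w₂`).  Then at `Q₊` : `w₁(Q₊) = w₂(Q₊) = w₊` while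
`w₀(Q₊) ≠ w₊`; and at `Q₋` : `w₀(Q₋) = w₂(Q₋) = w₋` while `w₁(Q₋) ≠ w₋`. -/
theorem branches_at_critical_values :
    ∃ ε > (0 : ℝ), ∀ z : ℂ, ‖z - 1 / 2‖ < ε →
      (∀ f : ℝ → ℂ, ContinuousOn f (Set.Icc (0 : ℝ) 1) →
        (∀ s ∈ Set.Icc (0 : ℝ) 1, cubicQ z (f s) = (s : ℂ) * Qplus z) →
        ((f 0 = 1 → f 1 = wplus z) ∧
         (f 0 = z → f 1 = wplus z) ∧
         (f 0 = 0 → f 1 ≠ wplus z))) ∧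
      (∀ f : ℝ → ℂ, ContinuousOn f (Set.Icc (0 : ℝ) 1) →
        (∀ s ∈ Set.Icc (0 : ℝ) 1, cubicQ z (f s) = (s : ℂ) * Qminus z) →
        ((f 0 = 0 → f 1 = wminus z) ∧
         (f 0 = z → f 1 = wminus z) ∧
         (f 0 = 1 → f 1 ≠ wminus z))) := by
  have hs1 := sqrt3_gt_one
  have hs0 : (0:ℝ) ≤ Real.sqrt 3 := Real.sqrt_nonneg 3
  -- eventually conditions near 1/2
  have E1 : ∀ᶠ z : ℂ in nhds (1/2), z^2 - z + 1 ≠ 0 := by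
    have hb : ContinuousAt (fun z : ℂ => z^2 - z + 1) (1/2) := by fun_prop
    exact hb.eventually_ne (by norm_num)
  have E2 : ∀ᶠ z : ℂ in nhds (1/2), ‖Qplus z - Qplus (1/2)‖ < 1/32 := by
    have := Metric.tendsto_nhds.mp hQp_cont (1/32) (by norm_num)
    filter_upwards [this] with z hz
    rwa [dist_eq_norm] at hz
  have E3 : ∀ᶠ z : ℂ in nhds (1/2), ‖Qminus z - Qminus (1/2)‖ < 1/32 := by
    have := Metric.tendsto_nhds.mp hQm_cont (1/32) (by norm_num)
    filter_upwards [this] with z hz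
    rwa [dist_eq_norm] at hz
  have E4 : ∀ᶠ z : ℂ in nhds (1/2), 1/4 < (wplus z).re := by
    have hco : ContinuousAt (fun z : ℂ => (wplus z).re) (1/2) :=
      Complex.continuous_re.continuousAt.comp hwp_cont
    apply hco.eventually (eventually_gt_nhds ?_)
    show (1:ℝ)/4 < (wplus (1/2)).re
    rw [wplus_half, Complex.ofReal_re]
    linarith
  have E5 : ∀ᶠ z : ℂ in nhds (1/2), ((1+z) - 2*wplus z).re < 1/4 := by
    have hco : ContinuousAt (fun z : ℂ => ((1+z) - 2*wplus z).re) (1/2) :=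
      Complex.continuous_re.continuousAt.comp
        ((continuousAt_const.add continuousAt_id).sub (continuousAt_const.mul hwp_cont))
    apply hco.eventually (eventually_lt_nhds ?_)
    show ((1+(1/2:ℂ)) - 2*wplus (1/2)).re < 1/4
    have : (1+(1/2:ℂ)) - 2*wplus (1/2) = ((1/2 - Real.sqrt 3/3 : ℝ):ℂ) := by
      rw [wplus_half]; push_cast; ring
    rw [this, Complex.ofReal_re]
    linarith
  have E6 : ∀ᶠ z : ℂ in nhds (1/2), (wminus z).re < 3/4 := by
    have hco : ContinuousAt (fun z : ℂ => (wminus z).re) (1/2) :=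
      Complex.continuous_re.continuousAt.comp hwm_cont
    apply hco.eventually (eventually_lt_nhds ?_)
    show (wminus (1/2)).re < 3/4
    rw [wminus_half, Complex.ofReal_re]
    linarith
  have E7 : ∀ᶠ z : ℂ in nhds (1/2), 3/4 < ((1+z) - 2*wminus z).re := by
    have hco : ContinuousAt (fun z : ℂ => ((1+z) - 2*wminus z).re) (1/2) :=
      Complex.continuous_re.continuousAt.comp
        ((continuousAt_const.add continuousAt_id).sub (continuousAt_const.mul hwm_cont))
    apply hco.eventually (eventually_gt_nhds ?_)
    show (3:ℝ)/4 < ((1+(1/2:ℂ)) - 2*wminus (1/2)).re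
    have : (1+(1/2:ℂ)) - 2*wminus (1/2) = ((1/2 + Real.sqrt 3/3 : ℝ):ℂ) := by
      rw [wminus_half]; push_cast; ring
    rw [this, Complex.ofReal_re]
    linarith
  obtain ⟨ε₀, hε₀, hball⟩ := Metric.eventually_nhds_iff.mp
    ((((((E1.and E2).and E3).and E4).and E5).and E6).and E7)
  refine ⟨min ε₀ (1/12), lt_min hε₀ (by norm_num), fun z hz => ?_⟩
  have hz0 : dist z (1/2) < ε₀ := by
    rw [dist_eq_norm]
    calc ‖z - 1/2‖ < min ε₀ (1/12) := hz
      _ ≤ ε₀ := min_le_left _ _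
  obtain ⟨⟨⟨⟨⟨⟨hE1, hE2⟩, hE3⟩, hE4⟩, hE5⟩, hE6⟩, hE7⟩ := hball hz0
  have hz12 : ‖z - 1/2‖ < 1/12 := lt_of_lt_of_le hz (min_le_right _ _)
  have hzre : |z.re - 1/2| < 1/12 := by
    have h := Complex.abs_re_le_norm (z - 1/2)
    have : (z - 1/2).re = z.re - 1/2 := by simp
    rw [this] at h
    linarith
  have hzre' := abs_lt.mp hzre
  constructor
  · -- Qplus part
    intro f hf hfib
    have hne : ∀ s ∈ Set.Icc (0:ℝ) 1, (f s).re ≠ 1/4 := fun s hs =>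
      sep_plus z hz12 hE2 s hs.1 hs.2 (f s) (hfib s hs)
    have hfib1 : cubicQ z (f 1) = Qplus z := by
      have := hfib 1 (by norm_num)
      rwa [Complex.ofReal_one, one_mul] at this
    have hcases := fiber_plus z hE1 (f 1) hfib1
    have hend : 1/4 < (f 1).re → f 1 = wplus z := by
      intro hgt
      rcases hcases with h | h
      · exact h
      · exfalso; rw [h] at hgt; linarith
    refine ⟨?_, ?_, ?_⟩
    · intro h0
      apply hend
      apply stay_gt f hf _ hne
      rw [h0, Complex.one_re]; norm_num
    · intro h0
      apply hend
      apply stay_gt f hf _ hne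
      rw [h0]; linarith
    · intro h0 hcontra
      have hlt : (f 1).re < 1/4 := by
        apply stay_lt f hf _ hne
        rw [h0, Complex.zero_re]; norm_num
      rw [hcontra] at hlt
      linarith
  · -- Qminus part
    intro f hf hfib
    have hne : ∀ s ∈ Set.Icc (0:ℝ) 1, (f s).re ≠ 3/4 := fun s hs =>
      sep_minus z hz12 hE3 s hs.1 hs.2 (f s) (hfib s hs)
    have hfib1 : cubicQ z (f 1) = Qminus z := by
      have := hfib 1 (by norm_num)
      rwa [Complex.ofReal_one, one_mul] at this
    have hcases := fiber_minus z hE1 (f 1) hfib1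
    have hend : (f 1).re < 3/4 → f 1 = wminus z := by
      intro hgt
      rcases hcases with h | h
      · exact h
      · exfalso; rw [h] at hgt; linarith
    refine ⟨?_, ?_, ?_⟩
    · intro h0
      apply hend
      apply stay_lt f hf _ hne
      rw [h0, Complex.zero_re]; norm_num
    · intro h0
      apply hend
      apply stay_lt f hf _ hne
      rw [h0]; linarith
    · intro h0 hcontra
      have hlt : 3/4 < (f 1).re := by
        apply stay_gt f hf _ hne
        rw [h0, Complex.one_re]; norm_num
      rw [hcontra] at hlt
      linarith
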